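/- arXiv:1608.00849 — 2 statements merged into one kernel-verified Lean document; each statement's English description precedes it below -/
import Mathlib

section
/- Let f_v, N_v, y be natural numbers with f_v ≥ 1, N_v ≥ 3·f_v + 1 and 1 ≤ y ≤ f_v. Then the real-valued product ∏_{j=1}^{y} (f_v − (j−1)) / (N_v − (j−1)) is strictly less than 3^{−y}. -/
/-!
Taking the same number `j ≥ 0` away from the numerator and the denominator of a fraction below
`1/3` keeps it below `1/3`: `3 (f - j) < N - j` because `3 f < N` and `2 j ≥ 0`. So each of the
`y ≥ 1` factors lies in `(0, 1/3)`, and their product is below `(1/3)^y`.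
-/

open Finset

lemma Finset.prod_lt_pow_card_of_pos_of_lt {ι R : Type*} [CommMonoidWithZero R] [PartialOrder R]
    [ZeroLEOneClass R] [PosMulStrictMono R] [Nontrivial R] {s : Finset ι} {f : ι → R} {r : R}
    (hs : s.Nonempty) (hpos : ∀ i ∈ s, 0 < f i) (hlt : ∀ i ∈ s, f i < r) :
    ∏ i ∈ s, f i < r ^ #s := by
  simpa only [prod_const] using prod_lt_prod_of_nonempty hpos hlt hs

lemma sub_div_sub_lt_one_third {K : Type*} [Field K] [LinearOrder K] [IsStrictOrderedRing K]
    {a b x : K} (hx : 0 ≤ x) (hxa : x < a) (hab : 3 * a < b) :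
    (a - x) / (b - x) < 1 / 3 := by
  rw [div_lt_div_iff₀ (by linarith) three_pos]
  linarith

theorem ddemos_liveness_attempt_product_lt_general
    (f_v N_v y : ℕ) (hN : 3 * f_v + 1 ≤ N_v)
    (hy1 : 1 ≤ y) (hy2 : y ≤ f_v) :
    ∏ j ∈ Finset.range y, (((f_v : ℝ) - j) / ((N_v : ℝ) - j)) < (3 : ℝ) ^ (-(y : ℤ)) := by
  have hfN : 3 * (f_v : ℝ) < N_v := by exact_mod_cast Nat.lt_of_succ_le hN
  have hj_lt : ∀ j ∈ range y, (j : ℝ) < f_v := fun j hj => by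
    exact_mod_cast (mem_range.mp hj).trans_le hy2
  calc ∏ j ∈ range y, (((f_v : ℝ) - j) / ((N_v : ℝ) - j))
      < (1 / 3 : ℝ) ^ #(range y) := by
        refine prod_lt_pow_card_of_pos_of_lt (nonempty_range_iff.mpr (by omega)) ?_ ?_
        · intro j hj
          have hjf := hj_lt j hj
          exact div_pos (by linarith) (by linarith)
        · exact fun j hj => sub_div_sub_lt_one_third j.cast_nonneg (hj_lt j hj) hfN
    _ = (3 : ℝ) ^ (-(y : ℤ)) := by
        rw [card_range, zpow_neg, zpow_natCast, one_div, inv_pow]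

/-- Liveness key inequality: under the Byzantine threshold `N_v ≥ 3 f_v + 1`,
the probability of `y` failed attempts in a row,
`∏_{j=1}^{y} (f_v − (j−1)) / (N_v − (j−1))`, is strictly less than `3^{-y}`. -/
theorem ddemos_liveness_attempt_product_lt
    (f_v N_v y : ℕ) (hf : 1 ≤ f_v) (hN : 3 * f_v + 1 ≤ N_v)
    (hy1 : 1 ≤ y) (hy2 : y ≤ f_v) :
    ∏ j ∈ Finset.range y, (((f_v : ℝ) - j) / ((N_v : ℝ) - j)) < (3 : ℝ) ^ (-(y : ℤ)) :=
  ddemos_liveness_attempt_product_lt_general f_v N_v y hN hy1 hy2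
end

section
/- Let q be a prime, let p₁ and p₂ be distinct univariate polynomials over ZMod q of degrees at most d₁ and d₂ respectively, let κ be a real number, and let D be a probability mass function on ZMod q such that D(x) ≤ 2^{−κ} for every x ∈ ZMod q. Then the probability under D of the event {x : p₁(x) = p₂(x)} is at most max(d₁, d₂)·2^{−κ}. -/
open scoped ENNReal

namespace Polynomial

variable {R : Type*} [CommRing R] [IsDomain R] [DecidableEq R] {p₁ p₂ : R[X]}

theorem setOf_eval_eq_subset_roots_sub (hne : p₁ ≠ p₂) :
    {x | p₁.eval x = p₂.eval x} ⊆ ((p₁ - p₂).roots.toFinset : Set R) := by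
  intro x hx
  rw [Finset.mem_coe, Multiset.mem_toFinset, mem_roots (sub_ne_zero.mpr hne), IsRoot.def,
    eval_sub, sub_eq_zero]
  exact hx

theorem card_roots_toFinset_sub_le_max {d₁ d₂ : ℕ} (hd₁ : p₁.degree ≤ d₁)
    (hd₂ : p₂.degree ≤ d₂) :
    (p₁ - p₂).roots.toFinset.card ≤ max d₁ d₂ :=
  calc (p₁ - p₂).roots.toFinset.card ≤ Multiset.card (p₁ - p₂).roots :=
        Multiset.toFinset_card_le _
    _ ≤ (p₁ - p₂).natDegree := card_roots' _
    _ ≤ max p₁.natDegree p₂.natDegree := natDegree_sub_le _ _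
    _ ≤ max d₁ d₂ :=
        max_le_max (natDegree_le_of_degree_le hd₁) (natDegree_le_of_degree_le hd₂)

end Polynomial

theorem PMF.toOuterMeasure_le_card_mul {α : Type*} (D : PMF α) {s : Finset α} {c : ℝ≥0∞}
    (h : ∀ x ∈ s, D x ≤ c) : D.toOuterMeasure s ≤ s.card * c := by
  rw [D.toOuterMeasure_apply_finset, ← nsmul_eq_mul]
  exact Finset.sum_le_card_nsmul s D c h

/-- Min-entropy Schwartz–Zippel, polynomial-equality-test form: if `p₁ ≠ p₂` are
polynomials over `ZMod q` of degrees at most `d₁`, `d₂` and `D` is a PMF on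
`ZMod q` with `D x ≤ 2^{-κ}` for all `x`, then the probability of
`{x : p₁(x) = p₂(x)}` under `D` is at most `max(d₁,d₂) · 2^{-κ}`. -/
theorem min_entropy_schwartz_zippel_eq_test
    (q : ℕ) (hq : q.Prime) (d₁ d₂ : ℕ) (p₁ p₂ : Polynomial (ZMod q))
    (hne : p₁ ≠ p₂) (hd₁ : p₁.degree ≤ d₁) (hd₂ : p₂.degree ≤ d₂)
    (κ : ℝ) (D : PMF (ZMod q))
    (hD : ∀ x : ZMod q, D x ≤ (2 : ℝ≥0∞) ^ (-κ)) :
    D.toOuterMeasure {x : ZMod q | Polynomial.eval x p₁ = Polynomial.eval x p₂}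
      ≤ (max d₁ d₂ : ℝ≥0∞) * (2 : ℝ≥0∞) ^ (-κ) := by
  have : Fact q.Prime := ⟨hq⟩
  calc D.toOuterMeasure {x | p₁.eval x = p₂.eval x}
      ≤ D.toOuterMeasure (p₁ - p₂).roots.toFinset :=
        D.toOuterMeasure.mono (Polynomial.setOf_eval_eq_subset_roots_sub hne)
    _ ≤ (p₁ - p₂).roots.toFinset.card * (2 : ℝ≥0∞) ^ (-κ) :=
        D.toOuterMeasure_le_card_mul fun x _ => hD x
    _ ≤ (max d₁ d₂ : ℝ≥0∞) * (2 : ℝ≥0∞) ^ (-κ) := by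
        gcongr
        simpa [Nat.cast_max] using Polynomial.card_roots_toFinset_sub_le_max hd₁ hd₂
end
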